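/- arXiv:1911.03043 — 4 statements merged into one kernel-verified Lean document; each statement's English description precedes it below -/
import Mathlib

section
/- Let ρ be a probability measure on ℝ^d with density proportional to exp(-f(x)) where f is convex with global minimum at 0 and f(0)=0. Then for any radius r ≥ 0, the probability under ρ that ‖x‖ ≥ r is at most the probability that ‖x‖ ≥ r under a standard Gaussian N(0, σ²I_d), provided f is (1/σ²)-strongly convex. -/
/-!
Write `f x = ‖x‖² / (2σ²) + h x`. Strong convexity makes `h` convex, and quadratic growth of `f`
around its minimiser makes `0` a minimiser of `h`, so `e^{-h}` is non-increasing along every ray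
from the origin. Hence `ρ` is the Gaussian `ν` reweighted by a radially non-increasing density.
In polar coordinates, on each ray the weight is at most some threshold `c(θ)` beyond radius `r`
and at least `c(θ)` inside it; this gives `ρ A · ν Aᶜ ≤ ν A · ρ Aᶜ` for `A = {r ≤ ‖x‖}`, which
for probability measures is `ρ A ≤ ν A`.
-/

open MeasureTheory Real Set
open scoped ENNReal

open Filter Topology Metric

section Convexity

variable {E : Type*} [NormedAddCommGroup E] [NormedSpace ℝ E] {s : Set E} {m : ℝ} {f : E → ℝ}
  {x₀ x : E}

theorem StrongConvexOn.add_sq_norm_sub_le_of_isMinOn (hf : StrongConvexOn s m f)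
    (hmin : IsMinOn f s x₀) (hx₀ : x₀ ∈ s) (hx : x ∈ s) :
    f x₀ + m / 2 * ‖x - x₀‖ ^ 2 ≤ f x := by
  have hbound : ∀ t ∈ Ioc (0 : ℝ) 1, (1 - t) * (m / 2 * ‖x - x₀‖ ^ 2) ≤ f x - f x₀ := by
    rintro t ⟨ht₀, ht₁⟩
    have hcomb := hf.2 hx hx₀ ht₀.le (sub_nonneg.2 ht₁) (add_sub_cancel t 1)
    have hle := isMinOn_iff.1 hmin _ (hf.1 hx hx₀ ht₀.le (sub_nonneg.2 ht₁) (add_sub_cancel t 1))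
    simp only [smul_eq_mul] at hcomb
    nlinarith
  have hlim : Tendsto (fun t : ℝ => (1 - t) * (m / 2 * ‖x - x₀‖ ^ 2)) (𝓝[>] 0)
      (𝓝 (m / 2 * ‖x - x₀‖ ^ 2)) :=
    tendsto_nhdsWithin_of_tendsto_nhds (Continuous.tendsto' (by fun_prop) _ _ (by simp))
  have := le_of_tendsto hlim (mem_of_superset (Ioc_mem_nhdsGT zero_lt_one) hbound)
  linarith

theorem ConvexOn.apply_smul_le (hf : ConvexOn ℝ s f) (h0 : (0 : E) ∈ s) (hx : x ∈ s)
    (hmin : f 0 ≤ f x) {c : ℝ} (hc : c ∈ Icc (0 : ℝ) 1) : f (c • x) ≤ f x := by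
  simpa [hmin] using hf.le_on_segment' hx h0 hc.1 (sub_nonneg.2 hc.2) (add_sub_cancel c 1)

end Convexity

section InnerProduct

variable {E : Type*} [NormedAddCommGroup E] [InnerProductSpace ℝ E] {m : ℝ} {f : E → ℝ}

theorem StrongConvexOn.sub_sq_norm_smul_le (hf : StrongConvexOn univ m f)
    (hmin : ∀ y, f 0 ≤ f y) (x : E) {c : ℝ} (hc : c ∈ Icc (0 : ℝ) 1) :
    f (c • x) - m / 2 * ‖c • x‖ ^ 2 ≤ f x - m / 2 * ‖x‖ ^ 2 := by
  have hgrowth := hf.add_sq_norm_sub_le_of_isMinOn (fun y _ => hmin y) (mem_univ 0) (mem_univ x)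
  refine (strongConvexOn_iff_convex.1 hf).apply_smul_le (mem_univ 0) (mem_univ x) ?_ hc
  simp only [sub_zero, norm_zero] at hgrowth ⊢
  linarith

end InnerProduct

section Comparison

variable {α : Type*} [MeasurableSpace α] {A : Set α}

theorem measure_le_of_mul_measure_compl_le {ρ ν : Measure α} [IsProbabilityMeasure ρ]
    [IsProbabilityMeasure ν] (hA : MeasurableSet A) (h : ρ A * ν Aᶜ ≤ ν A * ρ Aᶜ) :
    ρ A ≤ ν A :=
  calc ρ A = ρ A * ν A + ρ A * ν Aᶜ := by
        rw [← mul_add, measure_add_measure_compl hA, measure_univ, mul_one]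
    _ ≤ ν A * ρ A + ν A * ρ Aᶜ := by rw [mul_comm (ρ A)]; gcongr
    _ = ν A := by rw [← mul_add, measure_add_measure_compl hA, measure_univ, mul_one]

theorem setLIntegral_mul_setLIntegral_compl_le (μ : Measure α) (hA : MeasurableSet A)
    {w : α → ℝ≥0∞} (hw : Measurable w) {H : α → ℝ≥0∞} (hH : ∀ x ∈ A, ∀ y ∉ A, H x ≤ H y) :
    (∫⁻ x in A, w x * H x ∂μ) * ∫⁻ x in Aᶜ, w x ∂μ ≤
      (∫⁻ x in A, w x ∂μ) * ∫⁻ x in Aᶜ, w x * H x ∂μ := by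
  set c := ⨆ x ∈ A, H x
  have hin : ∫⁻ x in A, w x * H x ∂μ ≤ (∫⁻ x in A, w x ∂μ) * c := by
    rw [← lintegral_mul_const _ hw]
    exact setLIntegral_mono' hA fun x hx => by gcongr; exact le_iSup₂ (f := fun x _ => H x) x hx
  have hout : c * ∫⁻ x in Aᶜ, w x ∂μ ≤ ∫⁻ x in Aᶜ, w x * H x ∂μ := by
    refine (lintegral_const_mul_le _ _).trans (setLIntegral_mono' hA.compl fun y hy => ?_)
    rw [mul_comm]
    gcongr
    exact iSup₂_le fun x hx => hH x hx y hy
  calc (∫⁻ x in A, w x * H x ∂μ) * ∫⁻ x in Aᶜ, w x ∂μ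
      ≤ (∫⁻ x in A, w x ∂μ) * c * ∫⁻ x in Aᶜ, w x ∂μ := by gcongr
    _ ≤ (∫⁻ x in A, w x ∂μ) * ∫⁻ x in Aᶜ, w x * H x ∂μ := by rw [mul_assoc]; gcongr

theorem lintegral_mul_lintegral_const_le (μ : Measure α) {a b : α → ℝ≥0∞} (ha : Measurable a)
    (hb : Measurable b) {p q : ℝ≥0∞} (h : ∀ θ, a θ * q ≤ p * b θ) :
    (∫⁻ θ, a θ ∂μ) * ∫⁻ _, q ∂μ ≤ (∫⁻ _, p ∂μ) * ∫⁻ θ, b θ ∂μ :=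
  calc (∫⁻ θ, a θ ∂μ) * ∫⁻ _, q ∂μ = (∫⁻ θ, a θ * q ∂μ) * μ univ := by
        rw [lintegral_const, lintegral_mul_const _ ha, mul_assoc]
    _ ≤ (∫⁻ θ, p * b θ ∂μ) * μ univ := by gcongr ?_ * _; exact lintegral_mono h
    _ = (∫⁻ _, p ∂μ) * ∫⁻ θ, b θ ∂μ := by rw [lintegral_const, lintegral_const_mul _ hb]; ring

end Comparison

section Polar

local notation "dim" => Module.finrank ℝ

variable {E : Type*} [NormedAddCommGroup E] [NormedSpace ℝ E]

@[simp]
theorem norm_coe_smul_coe (θ : sphere (0 : E) 1) (s : Ioi (0 : ℝ)) :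
    ‖(s : ℝ) • (θ : E)‖ = s := by
  simp [norm_smul, abs_of_pos s.2.out]

variable [MeasurableSpace E] [BorelSpace E]

theorem measurable_smul_sphere :
    Measurable fun p : sphere (0 : E) 1 × Ioi (0 : ℝ) => (p.2 : ℝ) • (p.1 : E) := by
  fun_prop

variable [FiniteDimensional ℝ E] (μ : Measure E) [μ.IsAddHaarMeasure]

theorem lintegral_eq_lintegral_toSphere [Nontrivial E] {F : E → ℝ≥0∞} (hF : Measurable F) :
    ∫⁻ x, F x ∂μ =
      ∫⁻ θ, ∫⁻ s, F ((s : ℝ) • (θ : E)) ∂Measure.volumeIoiPow (dim E - 1) ∂μ.toSphere := by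
  have hpolar (x : ({0}ᶜ : Set E)) :
      F x =
        F (((homeomorphUnitSphereProd E x).2 : ℝ) • ((homeomorphUnitSphereProd E x).1 : E)) := by
    simp [smul_inv_smul₀ (norm_ne_zero_iff.2 x.2)]
  calc ∫⁻ x, F x ∂μ = ∫⁻ x : ({0}ᶜ : Set E), F x ∂μ.comap (↑) := by
        rw [lintegral_subtype_comap (measurableSet_singleton 0).compl, restrict_compl_singleton]
    _ = _ := by
      rw [lintegral_congr hpolar, μ.measurePreserving_homeomorphUnitSphereProd.lintegral_comp_emb
        (Homeomorph.measurableEmbedding _) (fun p => F ((p.2 : ℝ) • (p.1 : E)))]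
      exact lintegral_prod _ (hF.comp measurable_smul_sphere).aemeasurable

theorem setLIntegral_norm_preimage_eq [Nontrivial E] {F : E → ℝ≥0∞} (hF : Measurable F)
    {T : Set ℝ} (hT : MeasurableSet T) :
    ∫⁻ x in (‖·‖) ⁻¹' T, F x ∂μ =
      ∫⁻ θ, ∫⁻ s in Subtype.val ⁻¹' T, F ((s : ℝ) • (θ : E))
        ∂Measure.volumeIoiPow (dim E - 1) ∂μ.toSphere := by
  rw [← lintegral_indicator (measurable_norm hT),
    lintegral_eq_lintegral_toSphere μ (hF.indicator (measurable_norm hT))]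
  refine lintegral_congr fun θ => ?_
  rw [← lintegral_indicator (measurable_subtype_coe hT)]
  refine lintegral_congr fun s => ?_
  by_cases hs : (s : ℝ) ∈ T <;> simp [hs]

theorem setLIntegral_norm_ge_mul_compl_le {w : ℝ → ℝ≥0∞} (hw : Measurable w) {H : E → ℝ≥0∞}
    (hH : Measurable H) (hHrad : ∀ x, ∀ c ∈ Icc (0 : ℝ) 1, H x ≤ H (c • x)) (r : ℝ) :
    (∫⁻ x in {x | r ≤ ‖x‖}, w ‖x‖ * H x ∂μ) * ∫⁻ x in {x | r ≤ ‖x‖}ᶜ, w ‖x‖ ∂μ ≤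
      (∫⁻ x in {x | r ≤ ‖x‖}, w ‖x‖ ∂μ) * ∫⁻ x in {x | r ≤ ‖x‖}ᶜ, w ‖x‖ * H x ∂μ := by
  rcases subsingleton_or_nontrivial E with hE | hE
  · have hA : {x : E | r ≤ ‖x‖} = univ ∨ {x : E | r ≤ ‖x‖} = ∅ := by
      simp only [Subsingleton.elim _ (0 : E), norm_zero]
      by_cases hr : r ≤ 0 <;> simp [hr]
    rcases hA with hA | hA <;> simp [hA]
  set m := Measure.volumeIoiPow (dim E - 1)
  have hT : MeasurableSet (Ici r) := measurableSet_Ici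
  have hfiber (θ : sphere (0 : E) 1) :
      (∫⁻ s in Subtype.val ⁻¹' Ici r, w s * H ((s : ℝ) • (θ : E)) ∂m) *
          ∫⁻ s in Subtype.val ⁻¹' (Ici r)ᶜ, w s ∂m ≤
        (∫⁻ s in Subtype.val ⁻¹' Ici r, w s ∂m) *
          ∫⁻ s in Subtype.val ⁻¹' (Ici r)ᶜ, w s * H ((s : ℝ) • (θ : E)) ∂m := by
    refine setLIntegral_mul_setLIntegral_compl_le m (measurable_subtype_coe hT)
      (hw.comp measurable_subtype_coe) fun s hs t ht => ?_
    have hts : (t : ℝ) ≤ s := (not_le.1 ht).le.trans hs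
    simpa [smul_smul, div_mul_cancel₀ _ s.2.out.ne'] using hHrad ((s : ℝ) • (θ : E)) (t / s)
      ⟨div_nonneg t.2.out.le s.2.out.le, div_le_one_of_le₀ hts s.2.out.le⟩
  have hmeas (T : Set (Ioi (0 : ℝ))) :
      Measurable fun θ : sphere (0 : E) 1 => ∫⁻ s in T, w s * H ((s : ℝ) • (θ : E)) ∂m :=
    ((hw.comp (measurable_subtype_coe.comp measurable_snd)).mul
      (hH.comp measurable_smul_sphere)).lintegral_prod_right'
  have hwn : Measurable fun x : E => w ‖x‖ := hw.comp measurable_norm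
  have hwnH : Measurable fun x : E => w ‖x‖ * H x := hwn.mul hH
  change (∫⁻ x in (‖·‖) ⁻¹' Ici r, _ ∂μ) * ∫⁻ x in (‖·‖) ⁻¹' (Ici r)ᶜ, _ ∂μ ≤
    (∫⁻ x in (‖·‖) ⁻¹' Ici r, _ ∂μ) * ∫⁻ x in (‖·‖) ⁻¹' (Ici r)ᶜ, _ ∂μ
  rw [setLIntegral_norm_preimage_eq μ hwnH hT, setLIntegral_norm_preimage_eq μ hwnH hT.compl,
    setLIntegral_norm_preimage_eq μ hwn hT, setLIntegral_norm_preimage_eq μ hwn hT.compl]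
  simp only [norm_coe_smul_coe]
  exact lintegral_mul_lintegral_const_le _ (hmeas _) (hmeas _) hfiber

end Polar

theorem tail_le_gaussian_tail_general
    {d : ℕ} (σ : ℝ)
    (f : EuclideanSpace ℝ (Fin d) → ℝ)
    (hf : StrongConvexOn univ (1 / σ ^ 2) f)
    (hmin : ∀ x, f 0 ≤ f x)
    (ρ ν : Measure (EuclideanSpace ℝ (Fin d)))
    [IsProbabilityMeasure ρ] [IsProbabilityMeasure ν]
    (cρ : ℝ≥0∞)
    (hρ : ρ = cρ • volume.withDensity (fun x => ENNReal.ofReal (Real.exp (-f x))))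
    (cν : ℝ≥0∞)
    (hν : ν = cν • volume.withDensity
      (fun x => ENNReal.ofReal (Real.exp (-‖x‖ ^ 2 / (2 * σ ^ 2)))))
    (r : ℝ) :
    ρ {x | r ≤ ‖x‖} ≤ ν {x | r ≤ ‖x‖} := by
  set h := fun x => f x - 1 / σ ^ 2 / 2 * ‖x‖ ^ 2
  have hconv : ConvexOn ℝ univ h := strongConvexOn_iff_convex.1 hf
  have hrad (x : EuclideanSpace ℝ (Fin d)) (c : ℝ) (hc : c ∈ Icc (0 : ℝ) 1) :
      ENNReal.ofReal (exp (-h x)) ≤ ENNReal.ofReal (exp (-h (c • x))) := by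
    gcongr
    exact hf.sub_sq_norm_smul_le hmin x hc
  have hdens : (fun x => ENNReal.ofReal (exp (-f x))) = fun x =>
      ENNReal.ofReal (exp (-‖x‖ ^ 2 / (2 * σ ^ 2))) * ENNReal.ofReal (exp (-h x)) := by
    ext x
    rw [← ENNReal.ofReal_mul (exp_pos _).le, ← exp_add]
    congr 2
    ring
  have hA : MeasurableSet {x : EuclideanSpace ℝ (Fin d) | r ≤ ‖x‖} :=
    measurableSet_le measurable_const measurable_norm
  have hH : Measurable fun x => ENNReal.ofReal (exp (-h x)) :=
    (continuousOn_univ.1 (hconv.continuousOn isOpen_univ)).neg.rexp.measurable.ennreal_ofReal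
  have hkey := setLIntegral_norm_ge_mul_compl_le volume
    (w := fun s => ENNReal.ofReal (exp (-s ^ 2 / (2 * σ ^ 2)))) (by fun_prop) hH hrad r
  refine measure_le_of_mul_measure_compl_le hA ?_
  simp only [hρ, hν, hdens, Measure.smul_apply, withDensity_apply _ hA,
    withDensity_apply _ hA.compl, smul_eq_mul]
  convert mul_le_mul_right hkey (cρ * cν) using 1 <;> ring

/-- If `ρ ∝ e^{-f}` with `f` being `(1/σ²)`-strongly convex with minimum at the origin,
then the norm tail probability of `ρ` is dominated by that of the centered Gaussian
`N(0, σ² I_d)`. -/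
theorem tail_le_gaussian_tail
    {d : ℕ} (σ : ℝ) (hσ : 0 < σ)
    (f : EuclideanSpace ℝ (Fin d) → ℝ)
    (hf : StrongConvexOn univ (1 / σ ^ 2) f)
    (hmin : ∀ x, f 0 ≤ f x) (h0 : f 0 = 0)
    (ρ ν : Measure (EuclideanSpace ℝ (Fin d)))
    [IsProbabilityMeasure ρ] [IsProbabilityMeasure ν]
    (cρ : ℝ≥0∞)
    (hρ : ρ = cρ • volume.withDensity (fun x => ENNReal.ofReal (Real.exp (-f x))))
    (cν : ℝ≥0∞)
    (hν : ν = cν • volume.withDensity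
      (fun x => ENNReal.ofReal (Real.exp (-‖x‖ ^ 2 / (2 * σ ^ 2)))))
    (r : ℝ) (hr : 0 ≤ r) :
    ρ {x | r ≤ ‖x‖} ≤ ν {x | r ≤ ‖x‖} :=
  tail_le_gaussian_tail_general σ f hf hmin ρ ν cρ hρ cν hν r
end

section
/- Let f : ℝ^d → ℝ be m-strongly convex with minimizer x*, and let ρ be the probability measure with density proportional to exp(-f(x)). Then E_{x∼ρ}‖x − x*‖ ≤ (1/√m)(√d + 2√(2 log 2)). -/
/-!
Strong convexity gives growth along every ray from the minimizer `x₀`: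
`f (x₀ + s • u) ≥ f (x₀ + u) + m / 2 * (s ^ 2 - 1) * ‖u‖ ^ 2` for `s ≥ 1`. Dilating by `s` about
`x₀` maps the tail `{‖x - x₀‖ > r}` onto `{‖x - x₀‖ > s r}`, multiplies the Haar measure by `s ^ n`
and the density `exp (-f)` by at most `exp (-(m / 2) (s ^ 2 - 1) r ^ 2)`. Since the tail at `r`
has mass at most one, `ρ {‖x - x₀‖ > s r} ≤ s ^ n exp (-(m / 2) (s ^ 2 - 1) r ^ 2)`, and for
`r = (√n + 1) / √m` this is at most `exp (-√m (s r - r))`. Integrating the tail gives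
`E ‖x - x₀‖ ≤ r + 1 / √m = (√n + 2) / √m`, and `2 ≤ 2 √(2 log 2)`.
-/

open MeasureTheory Real Set Filter Topology Module
open scoped ENNReal

section StrongConvexity

variable {E : Type*} [NormedAddCommGroup E] [NormedSpace ℝ E] {m : ℝ} {f : E → ℝ} {x : E}

lemma StrongConvexOn.add_sq_norm_sub_le (hf : StrongConvexOn univ m f) (hmin : ∀ y, f x ≤ f y)
    (y : E) : f x + m / 2 * ‖y - x‖ ^ 2 ≤ f y := by
  set K := m / 2 * ‖y - x‖ ^ 2
  have hnear : ∀ a ∈ Ioo (0 : ℝ) 1, (1 - a) * K ≤ f y - f x := by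
    rintro a ⟨ha0, ha1⟩
    have hconv := hf.2 (mem_univ y) (mem_univ x) ha0.le (sub_nonneg.2 ha1.le) (add_sub_cancel a 1)
    have hx := hmin (a • y + (1 - a) • x)
    simp only [smul_eq_mul] at hconv
    have : a * ((1 - a) * K) ≤ a * (f y - f x) := by simp only [K]; linarith
    exact le_of_mul_le_mul_left this ha0
  have hlim : Tendsto (fun a : ℝ => (1 - a) * K) (𝓝[>] 0) (𝓝 K) := by
    have : Tendsto (fun a : ℝ => (1 - a) * K) (𝓝 0) (𝓝 ((1 - 0) * K)) :=
      ((continuous_const.sub continuous_id).mul continuous_const).tendsto 0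
    simpa using this.mono_left nhdsWithin_le_nhds
  have hK := le_of_tendsto hlim (eventually_of_mem (Ioo_mem_nhdsGT one_pos) hnear)
  linarith

lemma StrongConvexOn.add_mul_sq_norm_le_of_one_le (hf : StrongConvexOn univ m f)
    (hmin : ∀ y, f x ≤ f y) (u : E) {s : ℝ} (hs : 1 ≤ s) :
    f (x + u) + m / 2 * (s ^ 2 - 1) * ‖u‖ ^ 2 ≤ f (x + s • u) := by
  have hs0 : 0 < s := by linarith
  have hconv := hf.2 (mem_univ (x + s • u)) (mem_univ x) (inv_nonneg.2 hs0.le)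
    (sub_nonneg.2 (inv_le_one_of_one_le₀ hs)) (add_sub_cancel _ _)
  have hpt : s⁻¹ • (x + s • u) + (1 - s⁻¹) • x = x + u := by
    rw [smul_add, smul_smul, inv_mul_cancel₀ hs0.ne']; module
  have hgrowth := hf.add_sq_norm_sub_le hmin (x + s • u)
  rw [hpt, add_sub_cancel_left, norm_smul, norm_of_nonneg hs0.le] at hconv
  rw [add_sub_cancel_left, norm_smul, norm_of_nonneg hs0.le] at hgrowth
  simp only [smul_eq_mul] at hconv
  have : s * (f (x + u) + m / 2 * (s ^ 2 - 1) * ‖u‖ ^ 2) ≤ s * f (x + s • u) := by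
    have h := mul_le_mul_of_nonneg_left hconv hs0.le
    field_simp at h
    nlinarith [mul_le_mul_of_nonneg_left hgrowth (sub_nonneg.2 hs)]
  exact le_of_mul_le_mul_left this hs0

end StrongConvexity

section Dilation

variable {E : Type*} [NormedAddCommGroup E] [NormedSpace ℝ E] [FiniteDimensional ℝ E]
  [MeasurableSpace E] [BorelSpace E] (μ : Measure E) [μ.IsAddHaarMeasure]

lemma lintegral_eq_ofReal_pow_mul_lintegral_comp_smul (g : E → ℝ≥0∞) {s : ℝ} (hs : 0 < s) :
    ∫⁻ x, g x ∂μ = ENNReal.ofReal (s ^ finrank ℝ E) * ∫⁻ x, g (s • x) ∂μ := by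
  have hmap := Measure.map_addHaar_smul μ hs.ne'
  have hcomp : ∫⁻ x, g (s • x) ∂μ = ∫⁻ x, g x ∂Measure.map (s • ·) μ :=
    (lintegral_map_equiv g (Homeomorph.smulOfNeZero s hs.ne').toMeasurableEquiv).symm
  rw [hcomp, hmap, lintegral_smul_measure, smul_eq_mul, ← mul_assoc,
    ← ENNReal.ofReal_mul (by positivity), abs_of_pos (by positivity), mul_inv_cancel₀ (by positivity), ENNReal.ofReal_one, one_mul]

lemma setLIntegral_norm_sub_gt_mul_le (g : E → ℝ≥0∞) (x₀ : E) {r s : ℝ} {K : ℝ≥0∞} (hs : 0 < s)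
    (hK : K ≠ ∞) (hg : ∀ u, r < ‖u‖ → g (x₀ + s • u) ≤ K * g (x₀ + u)) :
    ∫⁻ x in {x | s * r < ‖x - x₀‖}, g x ∂μ
      ≤ ENNReal.ofReal (s ^ finrank ℝ E) * K * ∫⁻ x in {x | r < ‖x - x₀‖}, g x ∂μ := by
  have hmeas (t : ℝ) : MeasurableSet {x : E | t < ‖x - x₀‖} :=
    measurableSet_lt measurable_const (by fun_prop)
  have hpt (u : E) : {x | s * r < ‖x - x₀‖}.indicator g (x₀ + s • u)
      ≤ K * {x | r < ‖x - x₀‖}.indicator g (x₀ + u) := by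
    by_cases hu : r < ‖u‖
    · have hu' : x₀ + s • u ∈ {x | s * r < ‖x - x₀‖} := by
        rw [mem_ofPred_eq, add_sub_cancel_left, norm_smul, norm_of_nonneg hs.le]; gcongr
      rw [indicator_of_mem hu', indicator_of_mem (by simpa using hu)]
      exact hg u hu
    · have hu' : x₀ + s • u ∉ {x | s * r < ‖x - x₀‖} := by
        rw [mem_ofPred_eq, add_sub_cancel_left, norm_smul, norm_of_nonneg hs.le]
        exact fun h => hu (lt_of_mul_lt_mul_left h hs.le)
      rw [indicator_of_notMem hu']
      exact zero_le
  calc ∫⁻ x in {x | s * r < ‖x - x₀‖}, g x ∂μ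
      = ∫⁻ u, {x | s * r < ‖x - x₀‖}.indicator g (x₀ + u) ∂μ := by
        rw [← lintegral_indicator (hmeas _), lintegral_add_left_eq_self]
    _ = ENNReal.ofReal (s ^ finrank ℝ E)
          * ∫⁻ u, {x | s * r < ‖x - x₀‖}.indicator g (x₀ + s • u) ∂μ :=
        lintegral_eq_ofReal_pow_mul_lintegral_comp_smul μ _ hs
    _ ≤ ENNReal.ofReal (s ^ finrank ℝ E)
          * ∫⁻ u, K * {x | r < ‖x - x₀‖}.indicator g (x₀ + u) ∂μ := by
        gcongr with u; exact hpt u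
    _ = ENNReal.ofReal (s ^ finrank ℝ E) * K * ∫⁻ x in {x | r < ‖x - x₀‖}, g x ∂μ := by
        rw [lintegral_const_mul' _ _ hK,
          lintegral_add_left_eq_self (fun x => {x | r < ‖x - x₀‖}.indicator g x),
          lintegral_indicator (hmeas _), mul_assoc]

end Dilation

lemma lintegral_Ioi_ofReal_exp_neg_mul_sub {a : ℝ} (ha : 0 < a) (r : ℝ) :
    ∫⁻ t in Ioi r, ENNReal.ofReal (exp (-(a * (t - r)))) = ENNReal.ofReal a⁻¹ := by
  have hexp (t : ℝ) : exp (-(a * (t - r))) = exp (a * r) * exp (-a * t) := by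
    rw [← exp_add]; ring_nf
  simp_rw [hexp]
  rw [← ofReal_integral_eq_lintegral_ofReal
      ((integrableOn_exp_mul_Ioi (neg_neg_of_pos ha) r).const_mul _)
      (Eventually.of_forall fun t => by positivity),
    integral_const_mul, integral_exp_mul_Ioi (neg_neg_of_pos ha)]
  congr 1
  rw [div_neg, neg_div, neg_neg, mul_div_assoc', ← exp_add]
  simp

lemma integral_le_add_inv_of_meas_lt_le_exp {Ω : Type*} [MeasurableSpace Ω] {μ : Measure Ω}
    [IsProbabilityMeasure μ] {X : Ω → ℝ} (hXm : AEMeasurable X μ) (hX : 0 ≤ᵐ[μ] X)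
    {a r : ℝ} (ha : 0 < a) (hr : 0 ≤ r)
    (htail : ∀ t, r < t → μ {ω | t < X ω} ≤ ENNReal.ofReal (exp (-(a * (t - r))))) :
    ∫ ω, X ω ∂μ ≤ r + a⁻¹ := by
  have hlin : ∫⁻ ω, ENNReal.ofReal (X ω) ∂μ ≤ ENNReal.ofReal (r + a⁻¹) :=
    calc ∫⁻ ω, ENNReal.ofReal (X ω) ∂μ = ∫⁻ t in Ioi 0, μ {ω | t < X ω} :=
          lintegral_eq_lintegral_meas_lt μ hX hXm
      _ ≤ ∫⁻ t in Ioc 0 r ∪ Ioi r, μ {ω | t < X ω} :=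
          lintegral_mono_set fun t ht => (lt_or_ge r t).elim Or.inr fun h => Or.inl ⟨ht, h⟩
      _ ≤ (∫⁻ t in Ioc 0 r, μ {ω | t < X ω}) + ∫⁻ t in Ioi r, μ {ω | t < X ω} :=
          lintegral_union_le (fun t => μ {ω | t < X ω}) _ _
      _ ≤ (∫⁻ t in Ioc 0 r, 1) + ∫⁻ t in Ioi r, ENNReal.ofReal (exp (-(a * (t - r)))) := by
          gcongr ?_ + ?_
          · exact setLIntegral_mono measurable_const fun _ _ => prob_le_one
          · exact setLIntegral_mono (by fun_prop) htail
      _ = ENNReal.ofReal (r + a⁻¹) := by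
          rw [lintegral_const, Measure.restrict_apply_univ, one_mul,
            lintegral_Ioi_ofReal_exp_neg_mul_sub ha, Real.volume_Ioc, sub_zero,
            ENNReal.ofReal_add hr (by positivity)]
  rw [integral_eq_lintegral_of_nonneg_ae hX hXm.aestronglyMeasurable]
  exact ENNReal.toReal_le_of_le_ofReal (by positivity) hlin

lemma pow_mul_exp_neg_le_exp_neg (n : ℕ) {s : ℝ} (hs : 1 ≤ s) :
    s ^ n * exp (-((s ^ 2 - 1) * (√n + 1) ^ 2 / 2)) ≤ exp (-((s - 1) * (√n + 1))) := by
  have hpow : s ^ n ≤ exp (n * (s - 1)) := by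
    rw [exp_nat_mul]
    gcongr
    linarith [add_one_le_exp (s - 1)]
  have hn : √n ^ 2 = n := sq_sqrt n.cast_nonneg
  have hexponent : n * (s - 1) - (s ^ 2 - 1) * (√n + 1) ^ 2 / 2 ≤ -((s - 1) * (√n + 1)) := by
    nlinarith [mul_nonneg (sub_nonneg.2 hs) (sqrt_nonneg (n : ℝ)),
      mul_nonneg (sub_nonneg.2 hs) (sq_nonneg (√n + 1))]
  calc s ^ n * exp (-((s ^ 2 - 1) * (√n + 1) ^ 2 / 2))
      ≤ exp (n * (s - 1)) * exp (-((s ^ 2 - 1) * (√n + 1) ^ 2 / 2)) := by gcongr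
    _ ≤ exp (-((s - 1) * (√n + 1))) := by
      rw [← exp_add]; gcongr; linarith

section LogConcave

variable {E : Type*} [NormedAddCommGroup E] [NormedSpace ℝ E] [FiniteDimensional ℝ E]
  [MeasurableSpace E] [BorelSpace E] {μ : Measure E} [μ.IsAddHaarMeasure] {m : ℝ} {f : E → ℝ}
  {x₀ : E}

lemma StrongConvexOn.withDensity_exp_neg_norm_sub_gt_le (hf : StrongConvexOn univ m f)
    (hm : 0 ≤ m) (hmin : ∀ y, f x₀ ≤ f y) {r s : ℝ} (hr : 0 ≤ r) (hs : 1 ≤ s) :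
    μ.withDensity (fun x => ENNReal.ofReal (exp (-f x))) {x | s * r < ‖x - x₀‖}
      ≤ ENNReal.ofReal (s ^ finrank ℝ E * exp (-(m / 2 * (s ^ 2 - 1) * r ^ 2)))
        * μ.withDensity (fun x => ENNReal.ofReal (exp (-f x))) {x | r < ‖x - x₀‖} := by
  have hmeas (t : ℝ) : MeasurableSet {x : E | t < ‖x - x₀‖} :=
    measurableSet_lt measurable_const (by fun_prop)
  have hdecay (u : E) (hu : r < ‖u‖) : ENNReal.ofReal (exp (-f (x₀ + s • u)))
      ≤ ENNReal.ofReal (exp (-(m / 2 * (s ^ 2 - 1) * r ^ 2)))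
        * ENNReal.ofReal (exp (-f (x₀ + u))) := by
    rw [← ENNReal.ofReal_mul (exp_nonneg _), ← exp_add]
    gcongr
    have hray := hf.add_mul_sq_norm_le_of_one_le hmin u hs
    have : m / 2 * (s ^ 2 - 1) * r ^ 2 ≤ m / 2 * (s ^ 2 - 1) * ‖u‖ ^ 2 := by
      have : 0 ≤ s ^ 2 - 1 := by nlinarith
      gcongr
    linarith
  rw [withDensity_apply _ (hmeas _), withDensity_apply _ (hmeas _),
    ENNReal.ofReal_mul (by positivity)]
  exact setLIntegral_norm_sub_gt_mul_le μ _ x₀ (by linarith) ENNReal.ofReal_ne_top hdecay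

lemma StrongConvexOn.meas_norm_sub_gt_le_exp (hf : StrongConvexOn univ m f) (hm : 0 < m)
    (hmin : ∀ y, f x₀ ≤ f y) {ρ : Measure E} [IsProbabilityMeasure ρ] {c : ℝ≥0∞}
    (hρ : ρ = c • μ.withDensity (fun x => ENNReal.ofReal (exp (-f x)))) {t : ℝ}
    (ht : (√(finrank ℝ E) + 1) / √m < t) :
    ρ {x | t < ‖x - x₀‖}
      ≤ ENNReal.ofReal (exp (-(√m * (t - (√(finrank ℝ E) + 1) / √m)))) := by
  set n := finrank ℝ E
  set r := (√n + 1) / √m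
  have hr : 0 < r := by positivity
  set s := t / r
  have hs : 1 ≤ s := (one_le_div hr).2 ht.le
  have hsr : s * r = t := div_mul_cancel₀ t hr.ne'
  have hmr : m * r ^ 2 = (√n + 1) ^ 2 := by
    rw [div_pow, sq_sqrt hm.le]; field_simp
  have hexp : m / 2 * (s ^ 2 - 1) * r ^ 2 = (s ^ 2 - 1) * (√n + 1) ^ 2 / 2 := by
    rw [← hmr]; ring
  have hlin : √m * (t - r) = (s - 1) * (√n + 1) := by
    rw [← hsr]; simp only [r]; field_simp
  calc ρ {x | t < ‖x - x₀‖}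
      = c * μ.withDensity (fun x => ENNReal.ofReal (exp (-f x))) {x | s * r < ‖x - x₀‖} := by
        rw [hρ, hsr, Measure.smul_apply, smul_eq_mul]
    _ ≤ c * (ENNReal.ofReal (s ^ n * exp (-(m / 2 * (s ^ 2 - 1) * r ^ 2)))
          * μ.withDensity (fun x => ENNReal.ofReal (exp (-f x))) {x | r < ‖x - x₀‖}) := by
        gcongr
        exact hf.withDensity_exp_neg_norm_sub_gt_le hm.le hmin hr.le hs
    _ = ENNReal.ofReal (s ^ n * exp (-(m / 2 * (s ^ 2 - 1) * r ^ 2))) * ρ {x | r < ‖x - x₀‖} := by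
        rw [hρ, Measure.smul_apply, smul_eq_mul, mul_left_comm]
    _ ≤ ENNReal.ofReal (s ^ n * exp (-(m / 2 * (s ^ 2 - 1) * r ^ 2))) :=
        mul_le_of_le_one_right' prob_le_one
    _ ≤ ENNReal.ofReal (exp (-(√m * (t - r)))) := by
        rw [hexp, hlin]
        gcongr
        exact pow_mul_exp_neg_le_exp_neg n hs

theorem StrongConvexOn.integral_norm_sub_le (hf : StrongConvexOn univ m f) (hm : 0 < m)
    (hmin : ∀ y, f x₀ ≤ f y) {ρ : Measure E} [IsProbabilityMeasure ρ] {c : ℝ≥0∞}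
    (hρ : ρ = c • μ.withDensity (fun x => ENNReal.ofReal (exp (-f x)))) :
    ∫ x, ‖x - x₀‖ ∂ρ ≤ (√(finrank ℝ E) + 2) / √m := by
  calc ∫ x, ‖x - x₀‖ ∂ρ ≤ (√(finrank ℝ E) + 1) / √m + (√m)⁻¹ :=
        integral_le_add_inv_of_meas_lt_le_exp (by fun_prop)
          (Eventually.of_forall fun x => norm_nonneg _) (sqrt_pos.2 hm) (by positivity)
          fun t ht => hf.meas_norm_sub_gt_le_exp hm hmin hρ ht
    _ = (√(finrank ℝ E) + 2) / √m := by ring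

end LogConcave

/-- For `ρ ∝ e^{-f}` with `f` `m`-strongly convex minimized at `xstar`,
`E_ρ ‖x - xstar‖ ≤ (1/√m)(√d + 2√(2 log 2))`. -/
theorem expectation_dist_to_mode_le
    {d : ℕ} (m : ℝ) (hm : 0 < m)
    (f : EuclideanSpace ℝ (Fin d) → ℝ)
    (hf : StrongConvexOn univ m f)
    (xstar : EuclideanSpace ℝ (Fin d))
    (hmin : ∀ x, f xstar ≤ f x)
    (ρ : Measure (EuclideanSpace ℝ (Fin d)))
    [IsProbabilityMeasure ρ]
    (c : ℝ≥0∞)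
    (hρ : ρ = c • volume.withDensity (fun x => ENNReal.ofReal (Real.exp (-f x)))) :
    ∫ x, ‖x - xstar‖ ∂ρ ≤ (1 / Real.sqrt m) * (Real.sqrt d + 2 * Real.sqrt (2 * Real.log 2)) := by
  have hlog : 1 ≤ √(2 * log 2) := by
    rw [one_le_sqrt]; linarith [log_two_gt_d9]
  calc ∫ x, ‖x - xstar‖ ∂ρ ≤ (√d + 2) / √m := by
        simpa using hf.integral_norm_sub_le hm hmin hρ
    _ ≤ (1 / √m) * (√d + 2 * √(2 * log 2)) := by
        rw [one_div_mul_eq_div]; gcongr; linarith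
end

section
/- Let Y₁,…,Y_M be independent nonnegative random variables with means Ȳᵢ = E[Yᵢ] > 0, and suppose there is η > 0 with ηM ≤ 1/5 such that E[Yᵢ²] ≤ (1+η)Ȳᵢ² for each i. Then for every ε > 0, P( |Y₁⋯Y_M − Ȳ₁⋯Ȳ_M| / (Ȳ₁⋯Ȳ_M) ≥ ε/2 ) ≤ 5ηM/ε². -/
/-!
By independence, the mean of `∏ Yᵢ` is `∏ Ȳᵢ` and its second moment is `∏ E[Yᵢ²]`, so
`Var(∏ Yᵢ) ≤ ((1 + η) ^ M - 1) (∏ Ȳᵢ)² ≤ (5/4) η M (∏ Ȳᵢ)²`, the last step from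
`(1 + η) ^ M ≤ exp (η M) ≤ 1 / (1 - η M)` and `η M ≤ 1/5`. Chebyshev's inequality at
deviation `(ε/2) ∏ Ȳᵢ` then gives the bound.
-/

open MeasureTheory ProbabilityTheory Finset
open scoped ENNReal

lemma one_add_pow_le_one_add_mul {η : ℝ} {M : ℕ} (hη : 0 ≤ η) (hηM : η * M ≤ 1 / 5) :
    (1 + η) ^ M ≤ 1 + 5 / 4 * (η * M) := by
  have hηM_nonneg : 0 ≤ η * M := by positivity
  calc (1 + η) ^ M ≤ Real.exp η ^ M := by
        gcongr
        linarith [Real.add_one_le_exp η]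
    _ = Real.exp (η * M) := by rw [← Real.exp_nat_mul, mul_comm]
    _ ≤ 1 / (1 - η * M) := Real.exp_bound_div_one_sub_of_interval hηM_nonneg (by linarith)
    _ ≤ 1 + 5 / 4 * (η * M) := by
        rw [div_le_iff₀ (by linarith)]
        nlinarith

namespace ProbabilityTheory.iIndepFun

variable {Ω ι : Type*} [MeasurableSpace Ω] {μ : Measure Ω} [Fintype ι] {X : ι → Ω → ℝ}

lemma integrable_fun_prod (hX : iIndepFun X μ) (hmeas : ∀ i, Measurable (X i))
    (hint : ∀ i, Integrable (X i) μ) : Integrable (fun ω ↦ ∏ i, X i ω) μ := by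
  refine ⟨Finset.aestronglyMeasurable_fun_prod _ fun i _ ↦ (hint i).1, ?_⟩
  have hnorm : iIndepFun (fun i ω ↦ (‖X i ω‖₊ : ℝ≥0∞)) μ :=
    hX.comp _ fun _ ↦ measurable_nnnorm.coe_nnreal_ennreal
  simp only [HasFiniteIntegral, enorm_eq_nnnorm, nnnorm_prod, ENNReal.ofNNReal_finsetProd]
  rw [lintegral_prod_eq_prod_lintegral_of_indepFun _ _ hnorm
    fun i ↦ (hmeas i).nnnorm.coe_nnreal_ennreal]
  exact ENNReal.prod_lt_top fun i _ ↦ (hint i).2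

lemma memLp_two_fun_prod (hX : iIndepFun X μ) (hmeas : ∀ i, Measurable (X i))
    (hL2 : ∀ i, MemLp (X i) 2 μ) : MemLp (fun ω ↦ ∏ i, X i ω) 2 μ := by
  rw [memLp_two_iff_integrable_sq (Finset.aestronglyMeasurable_fun_prod _ fun i _ ↦ (hL2 i).1)]
  simp only [← Finset.prod_pow]
  exact (hX.comp _ fun _ ↦ measurable_id.pow_const 2).integrable_fun_prod
    (fun i ↦ (hmeas i).pow_const 2) fun i ↦ (hL2 i).integrable_sq

lemma variance_fun_prod (hX : iIndepFun X μ) (hmeas : ∀ i, Measurable (X i))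
    (hL2 : ∀ i, MemLp (X i) 2 μ) :
    variance (fun ω ↦ ∏ i, X i ω) μ = ∏ i, ∫ ω, X i ω ^ 2 ∂μ - ∏ i, (∫ ω, X i ω ∂μ) ^ 2 := by
  have := hX.isProbabilityMeasure
  rw [variance_eq_sub (hX.memLp_two_fun_prod hmeas hL2)]
  have hsq : iIndepFun (fun i ω ↦ X i ω ^ 2) μ :=
    hX.comp (fun _ x ↦ x ^ 2) fun _ ↦ measurable_id.pow_const 2
  simp only [Pi.pow_apply, ← Finset.prod_pow]
  rw [hsq.integral_fun_prod_eq_prod_integral fun i ↦ ((hmeas i).pow_const 2).aestronglyMeasurable,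
    hX.integral_fun_prod_eq_prod_integral fun i ↦ (hmeas i).aestronglyMeasurable, Finset.prod_pow]

end ProbabilityTheory.iIndepFun

theorem prod_concentration_general
    {Ω : Type*} [MeasurableSpace Ω] (P : Measure Ω) [IsProbabilityMeasure P]
    (M : ℕ) (Y : Fin M → Ω → ℝ)
    (hmeas : ∀ i, Measurable (Y i))
    (hindep : iIndepFun Y P)
    (hL2 : ∀ i, MemLp (Y i) 2 P)
    (Ybar : Fin M → ℝ) (hYbar : ∀ i, Ybar i = ∫ ω, Y i ω ∂P)
    (hpos : ∀ i, 0 < Ybar i)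
    (η : ℝ) (hη : 0 < η) (hηM : η * M ≤ 1 / 5)
    (hmom : ∀ i, ∫ ω, (Y i ω) ^ 2 ∂P ≤ (1 + η) * (Ybar i) ^ 2)
    (ε : ℝ) (hε : 0 < ε) :
    P {ω | ε / 2 ≤ |(∏ i, Y i ω) - ∏ i, Ybar i| / ∏ i, Ybar i}
      ≤ ENNReal.ofReal (5 * η * M / ε ^ 2) := by
  set B := ∏ i, Ybar i
  have hB : 0 < B := Finset.prod_pos fun i _ ↦ hpos i
  have hmean : P[fun ω ↦ ∏ i, Y i ω] = B := by
    rw [hindep.integral_fun_prod_eq_prod_integral fun i ↦ (hmeas i).aestronglyMeasurable]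
    exact Finset.prod_congr rfl fun i _ ↦ (hYbar i).symm
  have hvar : variance (fun ω ↦ ∏ i, Y i ω) P ≤ 5 / 4 * (η * M) * B ^ 2 := by
    rw [hindep.variance_fun_prod hmeas hL2]
    calc ∏ i, ∫ ω, Y i ω ^ 2 ∂P - ∏ i, (∫ ω, Y i ω ∂P) ^ 2
        ≤ ∏ i, ((1 + η) * Ybar i ^ 2) - B ^ 2 := by
          refine sub_le_sub (Finset.prod_le_prod (fun i _ ↦ integral_nonneg fun ω ↦ sq_nonneg _)
            fun i _ ↦ hmom i) (le_of_eq ?_)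
          simp only [B, hYbar, Finset.prod_pow]
      _ = ((1 + η) ^ M - 1) * B ^ 2 := by
          rw [Finset.prod_mul_distrib, Finset.prod_const, Finset.prod_pow, Finset.card_fin]
          ring
      _ ≤ 5 / 4 * (η * M) * B ^ 2 := by
          gcongr
          linarith [one_add_pow_le_one_add_mul hη.le hηM]
  calc P {ω | ε / 2 ≤ |(∏ i, Y i ω) - B| / B}
      = P {ω | ε / 2 * B ≤ |(∏ i, Y i ω) - P[fun ω ↦ ∏ i, Y i ω]|} := by
        simp only [hmean, le_div_iff₀ hB]
    _ ≤ ENNReal.ofReal (variance (fun ω ↦ ∏ i, Y i ω) P / (ε / 2 * B) ^ 2) :=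
        meas_ge_le_variance_div_sq (hindep.memLp_two_fun_prod hmeas hL2) (by positivity)
    _ ≤ ENNReal.ofReal (5 * η * M / ε ^ 2) := by
        refine ENNReal.ofReal_le_ofReal ?_
        rw [div_le_div_iff₀ (by positivity) (by positivity)]
        nlinarith

/-- Chebyshev bound for a product of independent random variables with
relative second moments close to 1. -/
theorem prod_concentration
    {Ω : Type*} [MeasurableSpace Ω] (P : Measure Ω) [IsProbabilityMeasure P]
    (M : ℕ) (Y : Fin M → Ω → ℝ)
    (hmeas : ∀ i, Measurable (Y i))
    (hindep : iIndepFun Y P)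
    (hnonneg : ∀ i, ∀ ω, 0 ≤ Y i ω)
    (hL2 : ∀ i, MemLp (Y i) 2 P)
    (Ybar : Fin M → ℝ) (hYbar : ∀ i, Ybar i = ∫ ω, Y i ω ∂P)
    (hpos : ∀ i, 0 < Ybar i)
    (η : ℝ) (hη : 0 < η) (hηM : η * M ≤ 1 / 5)
    (hmom : ∀ i, ∫ ω, (Y i ω) ^ 2 ∂P ≤ (1 + η) * (Ybar i) ^ 2)
    (ε : ℝ) (hε : 0 < ε) :
    P {ω | ε / 2 ≤ |(∏ i, Y i ω) - ∏ i, Ybar i| / ∏ i, Ybar i}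
      ≤ ENNReal.ofReal (5 * η * M / ε ^ 2) :=
  prod_concentration_general P M Y hmeas hindep hL2 Ybar hYbar hpos η hη hηM hmom ε hε
end

section
/- Let f : ℝ^d → ℝ be μ-strongly convex and L-smooth with minimum f(x*) = 0 at x* = 0. Let Z₁ = ∫_{ℝ^d} exp(−f(x) − ‖x‖²/(2σ₁²)) dx with σ₁² = ε/(2dL). Then (1 − ε/2)(2πσ₁²)^{d/2} ≤ Z₁ ≤ (2πσ₁²)^{d/2}. -/
open MeasureTheory Real
open scoped RealInnerProductSpace

/-!
Since `f ≥ 0 = f 0`, the origin is a critical point, so `L`-smoothness at `0` gives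
`0 ≤ f x ≤ (L/2)‖x‖²`. The integrand is therefore squeezed between the Gaussians
`exp(-(L/2 + 1/(2σ₁²))‖x‖²)` and `exp(-‖x‖²/(2σ₁²))`, with integrals
`(2πσ₁²/(1 + Lσ₁²))^{d/2}` and `(2πσ₁²)^{d/2}`. As `Lσ₁² = ε/(2d)`, the lost factor is
`(1 + ε/(2d))^{-d/2} ≥ exp(-ε/4) ≥ 1 - ε/2`, independently of the dimension.
-/

section GaussianSandwich

variable {V : Type*} [NormedAddCommGroup V] [InnerProductSpace ℝ V] [FiniteDimensional ℝ V]
  [MeasurableSpace V] [BorelSpace V]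

theorem rexp_neg_sub_div_le_rexp_neg_mul {t x s : ℝ} (ht : 0 ≤ t) :
    rexp (-t - x / (2 * s)) ≤ rexp (-(1 / (2 * s)) * x) := by
  rw [exp_le_exp, neg_mul, one_div_mul_eq_div]
  linarith

theorem integrable_rexp_neg_mul_sq_norm {b : ℝ} (hb : 0 < b) :
    Integrable fun v : V => rexp (-b * ‖v‖ ^ 2) :=
  Integrable.of_integral_ne_zero <| by
    rw [GaussianFourier.integral_rexp_neg_mul_sq_norm hb]; positivity

theorem integrable_rexp_neg_sub_sq_norm_div {g : V → ℝ} (hg : Measurable g) (hg0 : ∀ v, 0 ≤ g v)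
    {s : ℝ} (hs : 0 < s) :
    Integrable fun v : V => rexp (-g v - ‖v‖ ^ 2 / (2 * s)) := by
  refine (integrable_rexp_neg_mul_sq_norm (V := V) (b := 1 / (2 * s)) (by positivity)).mono
    (by fun_prop) (Filter.Eventually.of_forall fun v => ?_)
  rw [norm_of_nonneg (exp_pos _).le, norm_of_nonneg (exp_pos _).le]
  exact rexp_neg_sub_div_le_rexp_neg_mul (hg0 v)

theorem integral_rexp_neg_sub_sq_norm_div_le {g : V → ℝ} (hg : Measurable g)
    (hg0 : ∀ v, 0 ≤ g v) {s : ℝ} (hs : 0 < s) :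
    ∫ v : V, rexp (-g v - ‖v‖ ^ 2 / (2 * s))
      ≤ (2 * π * s) ^ (Module.finrank ℝ V / 2 : ℝ) := by
  have hb : (0 : ℝ) < 1 / (2 * s) := by positivity
  calc ∫ v : V, rexp (-g v - ‖v‖ ^ 2 / (2 * s))
      ≤ ∫ v : V, rexp (-(1 / (2 * s)) * ‖v‖ ^ 2) := by
        refine integral_mono (integrable_rexp_neg_sub_sq_norm_div hg hg0 hs)
          (integrable_rexp_neg_mul_sq_norm hb) fun v => rexp_neg_sub_div_le_rexp_neg_mul (hg0 v)
    _ = (2 * π * s) ^ (Module.finrank ℝ V / 2 : ℝ) := by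
        rw [GaussianFourier.integral_rexp_neg_mul_sq_norm hb]
        congr 1
        field_simp

theorem rpow_div_one_add_mul_le_integral_rexp_neg_sub_sq_norm_div {g : V → ℝ}
    (hg : Measurable g) (hg0 : ∀ v, 0 ≤ g v) {L : ℝ} (hL : 0 ≤ L)
    (hgL : ∀ v, g v ≤ L / 2 * ‖v‖ ^ 2) {s : ℝ} (hs : 0 < s) :
    (2 * π * s / (1 + L * s)) ^ (Module.finrank ℝ V / 2 : ℝ)
      ≤ ∫ v : V, rexp (-g v - ‖v‖ ^ 2 / (2 * s)) := by
  have hb : 0 < L / 2 + 1 / (2 * s) := by positivity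
  calc (2 * π * s / (1 + L * s)) ^ (Module.finrank ℝ V / 2 : ℝ)
      = ∫ v : V, rexp (-(L / 2 + 1 / (2 * s)) * ‖v‖ ^ 2) := by
        rw [GaussianFourier.integral_rexp_neg_mul_sq_norm hb]
        congr 1
        field_simp
        ring
    _ ≤ ∫ v : V, rexp (-g v - ‖v‖ ^ 2 / (2 * s)) := by
        refine integral_mono (integrable_rexp_neg_mul_sq_norm hb)
          (integrable_rexp_neg_sub_sq_norm_div hg hg0 hs) fun v => exp_le_exp.mpr ?_
        have hgv := hgL v
        have hdiv : ‖v‖ ^ 2 / (2 * s) = 1 / (2 * s) * ‖v‖ ^ 2 := by ring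
        nlinarith

end GaussianSandwich

theorem one_sub_mul_rpow_le_rpow_div_one_add {a n A : ℝ} (ha : 0 ≤ a) (hn : 0 < n)
    (hA : 0 ≤ A) : (1 - a) * A ^ (n / 2) ≤ (A / (1 + a / n)) ^ (n / 2) := by
  have hk : 0 < 1 + a / n := by positivity
  rw [div_rpow hA hk.le, le_div_iff₀ (by positivity), mul_right_comm]
  refine mul_le_of_le_one_left (by positivity) ?_
  rcases le_or_gt a 1 with ha1 | ha1
  · calc (1 - a) * (1 + a / n) ^ (n / 2)
        ≤ rexp (-a) * rexp (a / n) ^ (n / 2) := by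
          gcongr
          all_goals linarith [add_one_le_exp (-a), add_one_le_exp (a / n)]
      _ = rexp (-(a / 2)) := by
          rw [← exp_mul, ← exp_add]
          congr 1
          field_simp
          ring
      _ ≤ 1 := exp_le_one_iff.mpr (by linarith)
  · exact (mul_nonpos_of_nonpos_of_nonneg (by linarith) (by positivity)).trans zero_le_one

theorem start_partition_function_bound_general
    {d : ℕ} (hd : 0 < d) (μ L ε : ℝ) (hμ : 0 < μ) (hL : μ ≤ L)
    (hε : 0 < ε)
    (f : EuclideanSpace ℝ (Fin d) → ℝ)
    (hC2 : ContDiff ℝ 2 f)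
    (hsm : ∀ x y, f y - f x - ⟪gradient f x, y - x⟫ ≤ L / 2 * ‖x - y‖ ^ 2)
    (hf0 : f 0 = 0) (hfnonneg : ∀ x, 0 ≤ f x) :
    (1 - ε / 2) * (2 * π * (ε / (2 * d * L))) ^ ((d : ℝ) / 2)
        ≤ ∫ x : EuclideanSpace ℝ (Fin d),
            Real.exp (-f x - ‖x‖ ^ 2 / (2 * (ε / (2 * d * L)))) ∧
      ∫ x : EuclideanSpace ℝ (Fin d),
            Real.exp (-f x - ‖x‖ ^ 2 / (2 * (ε / (2 * d * L))))
        ≤ (2 * π * (ε / (2 * d * L))) ^ ((d : ℝ) / 2) := by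
  have hL0 : 0 < L := hμ.trans_le hL
  have hd0 : (0 : ℝ) < d := Nat.cast_pos.mpr hd
  have hs : 0 < ε / (2 * d * L) := by positivity
  have hmin : IsLocalMin f 0 := .of_forall fun x => hf0 ▸ hfnonneg x
  have hgrad : gradient f 0 = 0 := by
    rw [gradient, hmin.fderiv_eq_zero, map_zero]
  have hquad : ∀ x, f x ≤ L / 2 * ‖x‖ ^ 2 := fun x => by
    simpa [hf0, hgrad] using hsm 0 x
  have hmeas : Measurable f := hC2.continuous.measurable
  have hLs : L * (ε / (2 * d * L)) = ε / 2 / d := by field_simp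
  have hupper := integral_rexp_neg_sub_sq_norm_div_le
    (V := EuclideanSpace ℝ (Fin d)) hmeas hfnonneg hs
  have hlower := rpow_div_one_add_mul_le_integral_rexp_neg_sub_sq_norm_div
    (V := EuclideanSpace ℝ (Fin d)) hmeas hfnonneg hL0.le hquad hs
  rw [finrank_euclideanSpace_fin] at hupper hlower
  rw [hLs] at hlower
  refine ⟨le_trans ?_ hlower, hupper⟩
  exact one_sub_mul_rpow_le_rpow_div_one_add (by positivity) hd0 (by positivity)

/-- The normalizing constant at the first (lowest) temperature is within `1 ± ε/2`
of the Gaussian normalizing constant `(2πσ₁²)^{d/2}`, where `σ₁² = ε/(2dL)`. -/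
theorem start_partition_function_bound
    {d : ℕ} (hd : 0 < d) (μ L ε : ℝ) (hμ : 0 < μ) (hL : μ ≤ L)
    (hε : 0 < ε) (hε1 : ε ≤ 1)
    (f : EuclideanSpace ℝ (Fin d) → ℝ)
    (hC2 : ContDiff ℝ 2 f)
    (hsc : ∀ x y, μ / 2 * ‖x - y‖ ^ 2 ≤ f y - f x - ⟪gradient f x, y - x⟫)
    (hsm : ∀ x y, f y - f x - ⟪gradient f x, y - x⟫ ≤ L / 2 * ‖x - y‖ ^ 2)
    (hf0 : f 0 = 0) (hfnonneg : ∀ x, 0 ≤ f x) :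
    (1 - ε / 2) * (2 * π * (ε / (2 * d * L))) ^ ((d : ℝ) / 2)
        ≤ ∫ x : EuclideanSpace ℝ (Fin d),
            Real.exp (-f x - ‖x‖ ^ 2 / (2 * (ε / (2 * d * L)))) ∧
      ∫ x : EuclideanSpace ℝ (Fin d),
            Real.exp (-f x - ‖x‖ ^ 2 / (2 * (ε / (2 * d * L))))
        ≤ (2 * π * (ε / (2 * d * L))) ^ ((d : ℝ) / 2) :=
  start_partition_function_bound_general hd μ L ε hμ hL hε f hC2 hsm hf0 hfnonneg
end
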